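/- arXiv:1311.3522 — 4 statements merged into one kernel-verified Lean document; each statement's English description precedes it below -/
import Mathlib

section
/- For every natural numbers A ≥ 1, B ≥ 1 and N ≥ 2, the power sums satisfy ∑_{j=1}^{N-1} j^{A·λ(N)} ≡ ∑_{j=1}^{N-1} j^{B·φ(N)} (mod N), where λ is the Carmichael function and φ is Euler's totient function. -/
/-!
Write `S(e) = ∑ x : ZMod N, x ^ e`. Since `λ(N) ∣ φ(N)`, it suffices that `S(e)` takes the same
value for all positive multiples `e` of `λ(N)`. The Chinese remainder theorem expresses `S(e)` for
`N = m n` with coprime `m, n` through the corresponding sums modulo `m` and `n`, so only prime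
powers `q = p ^ (k + 1)` remain, where `S(e) = φ(q)`: each unit contributes `1`, and the multiples
`p m` of `p` contribute `p ^ e ∑_{m < p ^ k} m ^ e`, which is divisible by `q` by induction on `k`.
For `k ≥ 1` the inner sum is `≡ φ(p ^ k) (mod p ^ k)`, hence divisible by `p ^ (k - 1)`, and
`e ≥ 2` because `-1` has order `2` in `(ZMod q)ˣ`.
-/

open Finset

/-- The Carmichael function: exponent of the unit group of `ZMod n`. -/
noncomputable def carmichael (n : ℕ) : ℕ := Monoid.exponent (ZMod n)ˣ

/-- `n` is composite. -/
def Composite (n : ℕ) : Prop := 2 ≤ n ∧ ¬ n.Prime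

/-- `n` is a Giuga number. -/
def IsGiuga (n : ℕ) : Prop :=
  Composite n ∧ ∀ p : ℕ, p.Prime → p ∣ n → p ∣ (n / p - 1)

theorem ArithmeticFunction.two_dvd_carmichael {n : ℕ} (hn : 2 < n) :
    2 ∣ ArithmeticFunction.carmichael n := by
  have : Fact (1 < n) := ⟨by omega⟩
  have hord : orderOf (-1 : (ZMod n)ˣ) = 2 := by
    rw [← orderOf_units, Units.coe_neg_one, orderOf_neg_one, ringChar.eq (ZMod n) n,
      if_neg hn.ne']
  exact hord ▸ orderOf_dvd_of_pow_eq_one (ArithmeticFunction.pow_carmichael _)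

theorem ZMod.sum_univ_eq_sum_range {M : Type*} [AddCommMonoid M] (N : ℕ) [NeZero N]
    (f : ZMod N → M) : ∑ x : ZMod N, f x = ∑ j ∈ range N, f j := by
  obtain ⟨n, rfl⟩ := Nat.exists_eq_succ_of_ne_zero (NeZero.ne N)
  rw [← Fin.sum_univ_eq_sum_range (fun j => f j)]
  exact sum_congr rfl fun x _ => congrArg f (ZMod.natCast_zmod_val x).symm

theorem Fintype.sum_prodMk_eq_card_smul {α β M N : Type*} [Fintype α] [Fintype β]
    [AddCommMonoid M] [AddCommMonoid N] (f : α → M) (g : β → N) :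
    ∑ x : α × β, (f x.1, g x.2) = (card β • ∑ a, f a, card α • ∑ b, g b) := by
  ext <;> simp [Fintype.sum_prod_type, Prod.fst_sum, Prod.snd_sum, Finset.smul_sum]

theorem Nat.sum_filter_coprime_pow_modEq_totient {n e : ℕ}
    (he : ArithmeticFunction.carmichael n ∣ e) :
    ∑ j ∈ range n with n.Coprime j, j ^ e ≡ n.totient [MOD n] := by
  rw [← ZMod.natCast_eq_natCast_iff, Nat.totient, card_eq_sum_ones, Nat.cast_sum, Nat.cast_sum]
  refine sum_congr rfl fun j hj => ?_
  obtain ⟨c, rfl⟩ := he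
  rw [Nat.cast_pow, Nat.cast_one, ← ZMod.coe_unitOfCoprime j (mem_filter.1 hj).2.symm,
    ← Units.val_pow_eq_pow_val, pow_mul, ArithmeticFunction.pow_carmichael, one_pow, Units.val_one]

theorem Nat.sum_filter_not_coprime_prime_pow {M : Type*} [AddCommMonoid M] {p : ℕ}
    (hp : p.Prime) (k : ℕ) (f : ℕ → M) :
    ∑ j ∈ range (p ^ (k + 1)) with ¬ (p ^ (k + 1)).Coprime j, f j =
      ∑ m ∈ range (p ^ k), f (p * m) := by
  rw [← sum_image fun _ _ _ _ => Nat.eq_of_mul_eq_mul_left hp.pos]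
  congr 1
  ext j
  simp only [mem_filter, mem_range, mem_image, Nat.coprime_pow_left_iff k.succ_pos,
    hp.coprime_iff_not_dvd, not_not]
  constructor
  · rintro ⟨hj, m, rfl⟩
    exact ⟨m, Nat.lt_of_mul_lt_mul_left (_root_.pow_succ' p k ▸ hj), rfl⟩
  · rintro ⟨m, hm, rfl⟩
    exact ⟨_root_.pow_succ' p k ▸ Nat.mul_lt_mul_of_pos_left hm hp.pos, dvd_mul_right p m⟩

theorem Nat.sum_range_pow_modEq_totient_of_prime_pow {p e : ℕ} (hp : p.Prime) (he : e ≠ 0) :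
    ∀ k, ArithmeticFunction.carmichael (p ^ k) ∣ e →
      ∑ j ∈ range (p ^ k), j ^ e ≡ (p ^ k).totient [MOD p ^ k]
  | 0, _ => by simp [Nat.modEq_one]
  | k + 1, hd => by
    have hmult : p ^ (k + 1) ∣ ∑ m ∈ range (p ^ k), (p * m) ^ e := by
      simp_rw [mul_pow, ← mul_sum]
      cases k with
      | zero => rw [zero_add, pow_one]; exact dvd_mul_of_dvd_left (dvd_pow_self p he) _
      | succ k =>
        have hd' := (ArithmeticFunction.carmichael_dvd (pow_dvd_pow p k.succ.le_succ)).trans hd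
        have hsum : p ^ k ∣ ∑ m ∈ range (p ^ (k + 1)), m ^ e :=
          ((sum_range_pow_modEq_totient_of_prime_pow hp he (k + 1) hd').dvd_iff
            (pow_dvd_pow p k.le_succ)).2 (totient_prime_pow_succ hp k ▸ dvd_mul_right _ _)
        have h2e : 2 ≤ e := Nat.le_of_dvd (Nat.pos_of_ne_zero he) <|
          (ArithmeticFunction.two_dvd_carmichael <| calc
            2 < 2 ^ 2 := by norm_num
            _ ≤ p ^ 2 := Nat.pow_le_pow_left hp.two_le 2
            _ ≤ p ^ (k + 1 + 1) := Nat.pow_le_pow_right hp.pos (by omega)).trans hd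
        rw [show k + 1 + 1 = 2 + k by omega, pow_add]
        exact mul_dvd_mul (pow_dvd_pow p h2e) hsum
    rw [← sum_filter_add_sum_filter_not _ (p ^ (k + 1)).Coprime,
      sum_filter_not_coprime_prime_pow hp k (· ^ e)]
    simpa using (sum_filter_coprime_pow_modEq_totient hd).add (Nat.modEq_zero_iff_dvd.2 hmult)

theorem ZMod.sum_pow_eq_totient_of_prime_pow {p k e : ℕ} [NeZero (p ^ k)] (hp : p.Prime)
    (he : e ≠ 0) (hd : ArithmeticFunction.carmichael (p ^ k) ∣ e) :
    ∑ x : ZMod (p ^ k), x ^ e = (p ^ k).totient := by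
  rw [sum_univ_eq_sum_range]
  exact_mod_cast (ZMod.natCast_eq_natCast_iff _ _ _).2
    (Nat.sum_range_pow_modEq_totient_of_prime_pow hp he k hd)

theorem ZMod.chineseRemainder_sum_pow {m n : ℕ} [NeZero m] [NeZero n] (hmn : m.Coprime n)
    (e : ℕ) : ZMod.chineseRemainder hmn (∑ x, x ^ e) =
      (n • ∑ x : ZMod m, x ^ e, m • ∑ x : ZMod n, x ^ e) := by
  have : NeZero (m * n) := ⟨mul_ne_zero (NeZero.ne m) (NeZero.ne n)⟩
  rw [map_sum, Fintype.sum_bijective _ (chineseRemainder hmn).bijective _ (fun y => y ^ e)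
    fun x => map_pow _ x e]
  simp_rw [Prod.pow_def]
  simpa only [ZMod.card] using
    Fintype.sum_prodMk_eq_card_smul (fun x : ZMod m => x ^ e) (fun x : ZMod n => x ^ e)

theorem ZMod.sum_pow_eq_sum_pow_of_carmichael_dvd (N : ℕ) [NeZero N] {a b : ℕ} (ha : a ≠ 0)
    (hb : b ≠ 0) (hNa : ArithmeticFunction.carmichael N ∣ a)
    (hNb : ArithmeticFunction.carmichael N ∣ b) :
    ∑ x : ZMod N, x ^ a = ∑ x : ZMod N, x ^ b := by
  revert ‹NeZero N›
  induction N using Nat.recOnPrimeCoprime with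
  | zero => intro; exact absurd rfl (NeZero.ne 0)
  | prime_pow p k hp =>
    intro _
    rw [sum_pow_eq_totient_of_prime_pow hp ha hNa, sum_pow_eq_totient_of_prime_pow hp hb hNb]
  | coprime m n hm hn hmn ihm ihn =>
    intro _
    have : NeZero m := ⟨by omega⟩
    have : NeZero n := ⟨by omega⟩
    have hdm := ArithmeticFunction.carmichael_dvd (dvd_mul_right m n)
    have hdn := ArithmeticFunction.carmichael_dvd (dvd_mul_left n m)
    apply (ZMod.chineseRemainder hmn).injective
    rw [chineseRemainder_sum_pow, chineseRemainder_sum_pow, ihm (hdm.trans hNa) (hdm.trans hNb),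
      ihn (hdn.trans hNa) (hdn.trans hNb)]

theorem ZMod.sum_Ico_one_pow_eq_sum_univ (N : ℕ) [NeZero N] {e : ℕ} (he : e ≠ 0) :
    ∑ j ∈ Ico 1 N, (j : ZMod N) ^ e = ∑ x : ZMod N, x ^ e := by
  rw [sum_univ_eq_sum_range, range_eq_Ico, sum_eq_sum_Ico_succ_bot (NeZero.pos N), Nat.cast_zero,
    zero_pow he, zero_add]

theorem powerSum_carmichael_eq_powerSum_totient
    (A B N : ℕ) (hA : 1 ≤ A) (hB : 1 ≤ B) (hN : 2 ≤ N) :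
    ∑ j ∈ Finset.Ico 1 N, (j : ZMod N) ^ (A * carmichael N) =
      ∑ j ∈ Finset.Ico 1 N, (j : ZMod N) ^ (B * Nat.totient N) := by
  have : NeZero N := ⟨by omega⟩
  have hcarm : carmichael N = ArithmeticFunction.carmichael N :=
    (ArithmeticFunction.carmichael_eq_exponent' N).symm
  have hcarm_ne : ArithmeticFunction.carmichael N ≠ 0 := hcarm ▸ Monoid.exponent_ne_zero_of_finite
  have htot_ne : N.totient ≠ 0 := (Nat.totient_pos.2 (by omega)).ne'
  have hAe : A * ArithmeticFunction.carmichael N ≠ 0 := mul_ne_zero (by omega) hcarm_ne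
  have hBe : B * N.totient ≠ 0 := mul_ne_zero (by omega) htot_ne
  rw [hcarm, ZMod.sum_Ico_one_pow_eq_sum_univ N hAe, ZMod.sum_Ico_one_pow_eq_sum_univ N hBe]
  exact ZMod.sum_pow_eq_sum_pow_of_carmichael_dvd N hAe hBe (dvd_mul_left _ _)
    ((ArithmeticFunction.carmichael_dvd_totient N).mul_left B)
end

section
/- Let p be an odd prime, r ≥ 1, and let e be a positive integer divisible by p-1 with e ≥ r. Then ∑_{j=1}^{p^r - 1} j^e ≡ φ(p^r) ≡ -p^{r-1} (mod p^r). -/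
open Finset

/-!
Let `S r = ∑_{j < p^r} j^e`. Writing `j < p^(r+1)` as `p^r b + a` with `a < p^r` and `b < p`,
for `r ≥ 1` we have `(a + p^r b)^e ≡ a^e + e a^(e-1) p^r b (mod p^(r+1))`, and the correction
terms sum to a multiple of `p^r ∑_{b < p} b`, which vanishes mod `p^(r+1)` because `p` is odd.
Hence `S (r+1) ≡ p S r (mod p^(r+1))`. Fermat gives `S 1 ≡ p - 1 = φ p (mod p)`, and since
`φ (p^(r+1)) = p φ (p^r)`, induction yields `S r ≡ φ (p^r) (mod p^r)`.
-/

theorem Finset.sum_range_mul {M : Type*} [AddCommMonoid M] (f : ℕ → M) (m n : ℕ) :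
    ∑ j ∈ range (m * n), f j = ∑ b ∈ range n, ∑ a ∈ range m, f (m * b + a) := by
  induction n with
  | zero => simp
  | succ n ih => rw [Nat.mul_succ, sum_range_add, ih, sum_range_succ]

theorem add_pow_of_sq_eq_zero {R : Type*} [CommRing R] (x y : R) (hy : y ^ 2 = 0) (n : ℕ) :
    (x + y) ^ n = x ^ n + n * x ^ (n - 1) * y := by
  have h := sq_dvd_add_pow_sub_sub y x n
  rw [hy, zero_dvd_iff, sub_sub, sub_eq_zero] at h
  rw [h]
  ring

theorem Odd.dvd_sum_range_id {n : ℕ} (hn : Odd n) : n ∣ ∑ i ∈ range n, i := by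
  obtain ⟨k, rfl⟩ := hn
  refine ⟨k, Nat.eq_of_mul_eq_mul_right two_pos ?_⟩
  rw [sum_range_id_mul_two]
  simp only [add_tsub_cancel_right]
  ring

theorem sum_range_pow_eq_sum_Ico_one {R : Type*} [Semiring R] (n : ℕ) {e : ℕ} (he : e ≠ 0) :
    ∑ j ∈ range n, (j : R) ^ e = ∑ j ∈ Ico 1 n, (j : R) ^ e := by
  rcases Nat.eq_zero_or_pos n with rfl | hn
  · simp
  · rw [range_eq_Ico, sum_eq_sum_Ico_succ_bot hn]
    simp [he]

theorem sum_range_mul_pow_of_sq_eq_zero {R : Type*} [CommRing R] (N m e : ℕ)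
    (hN : (N : R) ^ 2 = 0) (hm : (N : R) * ∑ b ∈ range m, (b : R) = 0) :
    ∑ j ∈ range (N * m), (j : R) ^ e = m * ∑ a ∈ range N, (a : R) ^ e := by
  have hrow : ∀ b : ℕ, ∑ a ∈ range N, ((N * b + a : ℕ) : R) ^ e =
      ∑ a ∈ range N, (a : R) ^ e + N * b * (e * ∑ a ∈ range N, (a : R) ^ (e - 1)) := by
    intro b
    rw [mul_sum, mul_sum, ← sum_add_distrib]
    refine sum_congr rfl fun a _ => ?_
    have hsq : ((N * b : ℕ) : R) ^ 2 = 0 := by rw [Nat.cast_mul, mul_pow, hN, zero_mul]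
    rw [Nat.cast_add, add_comm, add_pow_of_sq_eq_zero _ _ hsq]
    push_cast
    ring
  rw [sum_range_mul, sum_congr rfl fun b _ => hrow b, sum_add_distrib, sum_const, card_range,
    nsmul_eq_mul, ← sum_mul, ← mul_sum, hm, zero_mul, add_zero]

theorem sum_range_pow_prime_modEq {p e : ℕ} (hp : p.Prime) (he : 0 < e) (hdvd : p - 1 ∣ e) :
    ∑ j ∈ range p, j ^ e ≡ p - 1 [MOD p] := by
  have : Fact p.Prime := ⟨hp⟩
  rw [← ZMod.natCast_eq_natCast_iff]
  push_cast
  rw [sum_range_pow_eq_sum_Ico_one p he.ne']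
  have hone : ∀ j ∈ Ico 1 p, (j : ZMod p) ^ e = 1 := by
    intro j hj
    obtain ⟨t, rfl⟩ := hdvd
    have hj0 : (j : ZMod p) ≠ 0 := by
      rw [Ne, ZMod.natCast_eq_zero_iff]
      exact Nat.not_dvd_of_pos_of_lt (mem_Ico.1 hj).1 (mem_Ico.1 hj).2
    rw [pow_mul, ZMod.pow_card_sub_one_eq_one hj0, one_pow]
  rw [sum_congr rfl hone, sum_const, Nat.card_Ico, nsmul_one]

theorem sum_range_pow_prime_pow_succ_modEq {p : ℕ} (hodd : Odd p) {r : ℕ} (hr : 1 ≤ r)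
    (e : ℕ) :
    ∑ j ∈ range (p ^ (r + 1)), j ^ e ≡
      p * ∑ j ∈ range (p ^ r), j ^ e [MOD p ^ (r + 1)] := by
  rw [← ZMod.natCast_eq_natCast_iff]
  push_cast
  have hsq : ((p ^ r : ℕ) : ZMod (p ^ (r + 1))) ^ 2 = 0 := by
    rw [← Nat.cast_pow, ZMod.natCast_eq_zero_iff, ← pow_mul]
    exact pow_dvd_pow p (by omega)
  have hgauss :
      ((p ^ r : ℕ) : ZMod (p ^ (r + 1))) * ∑ b ∈ range p, (b : ZMod (p ^ (r + 1))) = 0 := by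
    rw [← Nat.cast_sum, ← Nat.cast_mul, ZMod.natCast_eq_zero_iff, pow_succ]
    exact mul_dvd_mul_left _ hodd.dvd_sum_range_id
  have h := sum_range_mul_pow_of_sq_eq_zero (p ^ r) p e hsq hgauss
  rwa [← pow_succ] at h

theorem sum_range_pow_prime_pow_modEq_totient {p e : ℕ} (hp : p.Prime) (hodd : Odd p)
    (he : 0 < e) (hdvd : p - 1 ∣ e) {r : ℕ} (hr : 1 ≤ r) :
    ∑ j ∈ range (p ^ r), j ^ e ≡ Nat.totient (p ^ r) [MOD p ^ r] := by
  induction r, hr using Nat.le_induction with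
  | base => simpa [Nat.totient_prime hp] using sum_range_pow_prime_modEq hp he hdvd
  | succ r hr ih =>
    have htot : Nat.totient (p ^ (r + 1)) = p * Nat.totient (p ^ r) := by
      rw [pow_succ', Nat.totient_mul_of_prime_of_dvd hp (dvd_pow_self p (by omega))]
    calc ∑ j ∈ range (p ^ (r + 1)), j ^ e
        ≡ p * ∑ j ∈ range (p ^ r), j ^ e [MOD p ^ (r + 1)] :=
          sum_range_pow_prime_pow_succ_modEq hodd hr e
      _ ≡ p * Nat.totient (p ^ r) [MOD p ^ (r + 1)] := by
          rw [pow_succ']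
          exact ih.mul_left' p
      _ = Nat.totient (p ^ (r + 1)) := htot.symm

theorem powerSum_primePow_general (p r e : ℕ) (hp : p.Prime) (hodd : Odd p)
    (hr : 1 ≤ r) (he : 0 < e) (hdvd : (p - 1) ∣ e) :
    (∑ j ∈ Finset.Ico 1 (p ^ r), (j : ZMod (p ^ r)) ^ e)
        = (Nat.totient (p ^ r) : ZMod (p ^ r)) ∧
      (Nat.totient (p ^ r) : ZMod (p ^ r)) = -(p ^ (r - 1) : ℕ) := by
  constructor
  · have h := (ZMod.natCast_eq_natCast_iff _ _ _).2
      (sum_range_pow_prime_pow_modEq_totient hp hodd he hdvd hr)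
    push_cast at h
    rwa [sum_range_pow_eq_sum_Ico_one _ he.ne'] at h
  · obtain ⟨s, rfl⟩ : ∃ s, r = s + 1 := ⟨r - 1, by omega⟩
    rw [Nat.totient_prime_pow_succ hp, eq_neg_iff_add_eq_zero, ← Nat.cast_add, Nat.add_sub_cancel,
      ← mul_add_one, Nat.sub_add_cancel hp.one_le, ← pow_succ, ZMod.natCast_self]

theorem powerSum_primePow (p r e : ℕ) (hp : p.Prime) (hodd : Odd p)
    (hr : 1 ≤ r) (he : 0 < e) (hdvd : (p - 1) ∣ e) (her : r ≤ e) :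
    (∑ j ∈ Finset.Ico 1 (p ^ r), (j : ZMod (p ^ r)) ^ e)
        = (Nat.totient (p ^ r) : ZMod (p ^ r)) ∧
      (Nat.totient (p ^ r) : ZMod (p ^ r)) = -(p ^ (r - 1) : ℕ) :=
  powerSum_primePow_general p r e hp hodd hr he hdvd
end

section
/- A composite number n ≥ 2 is a Giuga number if and only if there exists a positive integer K such that ∑_{j=1}^{n-1} j^{K·λ(n)} ≡ -1 (mod n). -/
/-!
For a prime `p ∣ n` and an exponent `E > 0` divisible by `p - 1`, the residues of `0, …, n - 1`
mod `p` run `n / p` times through `𝔽_p`, where `∑ x, x ^ E = -1`; so `∑_{j<n} j ^ E ≡ -(n / p)`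
(mod `p`). Every positive multiple of `λ(n)` is such an exponent for every prime `p ∣ n`, hence
the power sum is `≡ -1` mod `p` exactly when `p ∣ n / p - 1`. A Giuga number is squarefree, so
these congruences modulo its prime factors combine into one modulo `n`.
-/

open Finset

theorem FiniteField.sum_pow_of_card_sub_one_dvd {K : Type*} [Field K] [Fintype K] {E : ℕ}
    (hE : E ≠ 0) (hd : Fintype.card K - 1 ∣ E) : ∑ x : K, x ^ E = -1 := by
  classical
  have h_units : ∀ x ∈ univ.erase (0 : K), x ^ E = 1 := fun x hx => by
    obtain ⟨k, rfl⟩ := hd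
    rw [pow_mul, pow_card_sub_one_eq_one x (ne_of_mem_erase hx), one_pow]
  rw [← sum_erase_add _ _ (mem_univ 0), sum_congr rfl h_units, zero_pow hE, add_zero, sum_const,
    card_erase_of_mem (mem_univ _), card_univ, nsmul_one, Nat.cast_pred Fintype.card_pos,
    cast_card_eq_zero, zero_sub]

theorem ZMod.sum_range_eq_sum_univ {M : Type*} [AddCommMonoid M] (p : ℕ) [NeZero p]
    (f : ZMod p → M) : ∑ j ∈ range p, f j = ∑ x : ZMod p, f x :=
  sum_nbij' (fun j => (j : ZMod p)) ZMod.val (fun _ _ => mem_univ _)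
    (fun x _ => mem_range.2 x.val_lt) (fun _ hj => ZMod.val_cast_of_lt (mem_range.1 hj))
    (fun x _ => ZMod.natCast_zmod_val x) fun _ _ => rfl

theorem ZMod.sum_range_mul_eq_nsmul_sum_univ {M : Type*} [AddCommMonoid M] (p m : ℕ) [NeZero p]
    (f : ZMod p → M) : ∑ j ∈ range (m * p), f j = m • ∑ x : ZMod p, f x := by
  induction m with
  | zero => simp
  | succ m ih =>
    rw [Nat.succ_mul, sum_range_add, ih, succ_nsmul, ← ZMod.sum_range_eq_sum_univ]
    simp only [Nat.cast_add, Nat.cast_mul, ZMod.natCast_self, mul_zero, zero_add]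

theorem ZMod.sum_range_pow_of_dvd {p n E : ℕ} [Fact p.Prime] (hpn : p ∣ n) (hE : E ≠ 0)
    (hd : p - 1 ∣ E) : ∑ j ∈ range n, (j : ZMod p) ^ E = -((n / p : ℕ) : ZMod p) := by
  obtain ⟨m, rfl⟩ := hpn
  rw [mul_comm, sum_range_mul_eq_nsmul_sum_univ (f := (· ^ E)),
    FiniteField.sum_pow_of_card_sub_one_dvd hE (by rwa [ZMod.card]),
    Nat.mul_div_cancel _ (Fact.out : p.Prime).pos, nsmul_eq_mul, mul_neg_one]

theorem ZMod.castHom_sum_Ico_pow {n p E : ℕ} [Fact p.Prime] (hpn : p ∣ n) (hE : E ≠ 0)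
    (hd : p - 1 ∣ E) :
    ZMod.castHom hpn (ZMod p) (∑ j ∈ Ico 1 n, (j : ZMod n) ^ E) = -((n / p : ℕ) : ZMod p) := by
  rw [← ZMod.sum_range_pow_of_dvd hpn hE hd, map_sum]
  simp only [map_pow, map_natCast]
  refine sum_subset (fun j hj => mem_range.2 (mem_Ico.1 hj).2) fun j hj_range hj_Ico => ?_
  obtain rfl : j = 0 := by simp_all
  simp [hE]

theorem carmichael_ne_zero (n : ℕ) : carmichael n ≠ 0 :=
  Monoid.exponent_ne_zero_of_finite

theorem Nat.Prime.sub_one_dvd_carmichael {p n : ℕ} (hp : p.Prime) (hpn : p ∣ n) (hn : n ≠ 0) :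
    p - 1 ∣ carmichael n := by
  have := Fact.mk hp
  have := NeZero.mk hn
  have h : Monoid.exponent (ZMod p)ˣ = p - 1 := by
    rw [IsCyclic.exponent_eq_card, Nat.card_eq_fintype_card, ZMod.card_units_eq_totient,
      Nat.totient_prime hp]
  exact h ▸ MonoidHom.exponent_dvd (ZMod.unitsMap_surjective hpn)

theorem dvd_div_sub_one_iff_natCast_div_eq_one {p n : ℕ} (hpn : p ∣ n) (hn : n ≠ 0) :
    p ∣ n / p - 1 ↔ ((n / p : ℕ) : ZMod p) = 1 := by
  have h : 1 ≤ n / p := Nat.div_pos (Nat.le_of_dvd (Nat.pos_of_ne_zero hn) hpn)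
    (Nat.pos_of_dvd_of_pos hpn (Nat.pos_of_ne_zero hn))
  rw [← ZMod.natCast_eq_zero_iff, Nat.cast_sub h, Nat.cast_one, sub_eq_zero]

theorem squarefree_of_forall_prime_dvd_div_sub_one {n : ℕ} (hn : n ≠ 0)
    (h : ∀ p : ℕ, p.Prime → p ∣ n → p ∣ n / p - 1) : Squarefree n := by
  rw [Nat.squarefree_iff_prime_squarefree]
  intro p hp hpp
  have := Fact.mk hp
  have hpn : p ∣ n := dvd_of_mul_right_dvd hpp
  have h_one := (dvd_div_sub_one_iff_natCast_div_eq_one hpn hn).1 (h p hp hpn)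
  have h_zero := (ZMod.natCast_eq_zero_iff _ p).2 (Nat.dvd_div_of_mul_dvd hpp)
  exact zero_ne_one (h_zero.symm.trans h_one)

theorem ZMod.eq_zero_of_forall_castHom_eq_zero {n : ℕ} (hn : Squarefree n) {x : ZMod n}
    (hx : ∀ p, p.Prime → ∀ hpn : p ∣ n, ZMod.castHom hpn (ZMod p) x = 0) : x = 0 := by
  have := NeZero.mk hn.ne_zero
  suffices ∏ p ∈ n.primeFactors, p ∣ x.val by
    rwa [Nat.prod_primeFactors_of_squarefree hn, ← ZMod.natCast_eq_zero_iff,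
      ZMod.natCast_zmod_val] at this
  refine prod_primes_dvd _ (fun p hp => (Nat.prime_of_mem_primeFactors hp).prime) fun p hp => ?_
  have := hx p (Nat.prime_of_mem_primeFactors hp) (Nat.dvd_of_mem_primeFactors hp)
  rwa [← ZMod.natCast_zmod_val x, map_natCast, ZMod.natCast_eq_zero_iff] at this

theorem giuga_iff_exists_carmichael_powerSum (n : ℕ) (hn : Composite n) :
    IsGiuga n ↔ ∃ K : ℕ, 0 < K ∧
      ∑ j ∈ Finset.Ico 1 n, (j : ZMod n) ^ (K * carmichael n) = -1 := by
  have hn0 : n ≠ 0 := by have := hn.1; omega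
  have castHom_powerSum : ∀ K ≠ 0, ∀ p, p.Prime → ∀ hpn : p ∣ n,
      ZMod.castHom hpn (ZMod p) (∑ j ∈ Ico 1 n, (j : ZMod n) ^ (K * carmichael n)) =
        -((n / p : ℕ) : ZMod p) :=
    fun K hK p hp hpn => have := Fact.mk hp
      ZMod.castHom_sum_Ico_pow hpn (mul_ne_zero hK (carmichael_ne_zero n))
        ((hp.sub_one_dvd_carmichael hpn hn0).mul_left K)
  constructor
  · rintro ⟨-, hg⟩
    refine ⟨1, one_pos, eq_neg_of_add_eq_zero_left <| ZMod.eq_zero_of_forall_castHom_eq_zero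
      (squarefree_of_forall_prime_dvd_div_sub_one hn0 hg) fun p hp hpn => ?_⟩
    rw [map_add, map_one, castHom_powerSum 1 one_ne_zero p hp hpn,
      (dvd_div_sub_one_iff_natCast_div_eq_one hpn hn0).1 (hg p hp hpn), neg_add_cancel]
  · rintro ⟨K, hK, hsum⟩
    refine ⟨hn, fun p hp hpn => (dvd_div_sub_one_iff_natCast_div_eq_one hpn hn0).2 ?_⟩
    have := congrArg (ZMod.castHom hpn (ZMod p)) hsum
    rwa [castHom_powerSum K hK.ne' p hp hpn, map_neg, map_one, neg_inj] at this
end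

section
/- For a Giuga number n, the set of positive integers k such that ∑_{j=1}^{n-1} j^{k(n-1)} ≡ -1 (mod n) is exactly the set of positive multiples of λ(n)/gcd(λ(n), n-1). -/
open Finset

/-!
A Giuga number `n` is squarefree, since `p ∣ n / p` and `p ∣ n / p - 1` cannot both hold.
Hence, by the Chinese remainder theorem, the congruence `∑_{j<n} j^m ≡ -1 (mod n)` splits into
one congruence for each prime `p ∣ n`. Modulo `p` the range `0 ≤ j < n` runs `n / p ≡ 1` times
through `ZMod p`, and `∑_{x ∈ 𝔽_p} x^m` is `-1` if `p - 1 ∣ m` and `0` otherwise (for `m > 0`).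
So the sum condition says `p - 1 ∣ m` for all `p ∣ n`, i.e. `λ(n) = lcm (p - 1) ∣ m`, and
`λ(n) ∣ k (n - 1)` is equivalent to `λ(n) / gcd(λ(n), n - 1) ∣ k`.
-/

namespace FiniteField
variable {K : Type*} [Field K] [Fintype K]

theorem sum_pow_of_ne_zero [DecidableEq K] {m : ℕ} (hm : m ≠ 0) :
    ∑ x : K, x ^ m = if Fintype.card K - 1 ∣ m then -1 else 0 := by
  rw [← sum_pow_units, ← sum_erase univ (zero_pow hm)]
  symm
  exact sum_bij (fun u _ => u.val) (by simp) (fun _ _ _ _ => Units.ext)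
    (fun x hx => ⟨Units.mk0 x (ne_of_mem_erase hx), mem_univ _, rfl⟩) (fun _ _ => rfl)

end FiniteField

namespace ZMod

theorem sum_range_natCast {M : Type*} [AddCommMonoid M] (p : ℕ) [NeZero p] (f : ZMod p → M) :
    ∑ j ∈ range p, f j = ∑ x, f x :=
  sum_nbij' (↑) val (by simp) (by simp [val_lt])
    (fun j hj => val_cast_of_lt (mem_range.1 hj)) (fun x _ => natCast_zmod_val x)
    (fun _ _ => rfl)

theorem sum_range_mul_natCast {M : Type*} [AddCommMonoid M] (p a : ℕ) [NeZero p]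
    (f : ZMod p → M) : ∑ j ∈ range (a * p), f j = a • ∑ x, f x := by
  induction a with
  | zero => simp
  | succ a ih =>
    simp only [add_mul, one_mul, sum_range_add, ih, Nat.cast_add, Nat.cast_mul, natCast_self,
      mul_zero, zero_add, sum_range_natCast, succ_nsmul]

end ZMod

theorem Nat.dvd_mul_iff_div_gcd_dvd {a b k : ℕ} (ha : 0 < a) : a ∣ k * b ↔ a / a.gcd b ∣ k := by
  have hg : 0 < a.gcd b := Nat.gcd_pos_of_pos_left b ha
  have hcop := Nat.coprime_div_gcd_div_gcd (m := a) (n := b) hg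
  have hab : a ∣ k * b ↔ a / a.gcd b * a.gcd b ∣ k * (b / a.gcd b) * a.gcd b := by
    rw [Nat.div_mul_cancel (Nat.gcd_dvd_left a b), mul_assoc,
      Nat.div_mul_cancel (Nat.gcd_dvd_right a b)]
  rw [hab, Nat.mul_dvd_mul_iff_right hg]
  exact hcop.dvd_mul_right

theorem ZMod.intCast_eq_intCast_iff_of_squarefree {n : ℕ} (hn : Squarefree n) (a b : ℤ) :
    (a : ZMod n) = b ↔ ∀ p ∈ n.primeFactors, (a : ZMod p) = b := by
  simp_rw [ZMod.intCast_eq_intCast_iff_dvd_sub, Int.natCast_dvd]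
  refine ⟨fun h p hp => (Nat.dvd_of_mem_primeFactors hp).trans h, fun h => ?_⟩
  rw [← Nat.prod_primeFactors_of_squarefree hn]
  exact prod_primes_dvd _ (fun p hp => (Nat.prime_of_mem_primeFactors hp).prime) h

namespace ArithmeticFunction

theorem carmichael_prime {p : ℕ} (hp : p.Prime) : carmichael p = p - 1 := by
  have := Fact.mk hp
  rw [carmichael_eq_exponent hp.ne_zero, IsCyclic.exponent_eq_card, Nat.card_eq_fintype_card,
    ZMod.card_units]

theorem carmichael_of_squarefree {n : ℕ} (hn : Squarefree n) :
    carmichael n = n.primeFactors.lcm (· - 1) := by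
  conv_lhs => rw [← Nat.prod_primeFactors_of_squarefree hn]
  rw [carmichael_finsetProd]
  · exact lcm_congr rfl fun p hp => carmichael_prime (Nat.prime_of_mem_primeFactors hp)
  · exact fun p hp q hq hpq => (Nat.coprime_primes (Nat.prime_of_mem_primeFactors hp)
      (Nat.prime_of_mem_primeFactors hq)).2 hpq

end ArithmeticFunction

namespace IsGiuga

variable {n : ℕ}

theorem natCast_div_eq_one (hn : IsGiuga n) {p : ℕ} (hp : p.Prime) (hpn : p ∣ n) :
    ((n / p : ℕ) : ZMod p) = 1 := by
  have hle : 1 ≤ n / p := Nat.div_pos (Nat.le_of_dvd (by have := hn.1.1; omega) hpn) hp.pos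
  rw [← Nat.cast_one, ZMod.natCast_eq_natCast_iff]
  exact ((Nat.modEq_iff_dvd' hle).2 (hn.2 p hp hpn)).symm

theorem squarefree (hn : IsGiuga n) : Squarefree n := by
  refine Nat.squarefree_iff_prime_squarefree.2 fun p hp hpp => ?_
  have hpn := (dvd_mul_right p p).trans hpp
  have := Fact.mk hp
  have h1 := hn.natCast_div_eq_one hp hpn
  rw [(ZMod.natCast_eq_zero_iff _ _).2 (Nat.dvd_div_of_mul_dvd hpp)] at h1
  exact zero_ne_one h1

theorem sum_Ico_pow_eq_neg_one_iff (hn : IsGiuga n) {p m : ℕ} (hp : p ∈ n.primeFactors)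
    (hm : m ≠ 0) : ∑ j ∈ Ico 1 n, (j : ZMod p) ^ m = -1 ↔ p - 1 ∣ m := by
  have hpn := Nat.dvd_of_mem_primeFactors hp
  have hp' := Nat.prime_of_mem_primeFactors hp
  have := Fact.mk hp'
  have hrange : ∑ j ∈ range n, (j : ZMod p) ^ m = (n / p) • ∑ x : ZMod p, x ^ m := by
    conv_lhs => rw [← Nat.div_mul_cancel hpn]
    exact ZMod.sum_range_mul_natCast ..
  rw [sum_range_eq_add_Ico _ (by have := hn.1.1; omega), Nat.cast_zero, zero_pow hm, zero_add,
    nsmul_eq_mul, hn.natCast_div_eq_one hp' hpn, one_mul] at hrange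
  rw [hrange, FiniteField.sum_pow_of_ne_zero hm, ZMod.card]
  split_ifs with h <;> simp [h]

end IsGiuga

theorem giuga_kSet (n : ℕ) (hn : IsGiuga n) :
    ∀ k : ℕ, 0 < k →
      ((∑ j ∈ Finset.Ico 1 n, (j : ZMod n) ^ (k * (n - 1)) = -1) ↔
        ∃ t : ℕ, 0 < t ∧ k = t * (carmichael n / Nat.gcd (carmichael n) (n - 1))) := by
  intro k hk
  have h2 : 2 ≤ n := hn.1.1
  set m := k * (n - 1)
  have hm : m ≠ 0 := Nat.mul_ne_zero hk.ne' (by omega)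
  have hcast (q : ℕ) : ∑ j ∈ Ico 1 n, (j : ZMod q) ^ m = -1 ↔
      ((∑ j ∈ Ico 1 n, (j : ℤ) ^ m : ℤ) : ZMod q) = ((-1 : ℤ) : ZMod q) := by
    push_cast; rfl
  calc ∑ j ∈ Ico 1 n, (j : ZMod n) ^ m = -1
      ↔ ∀ p ∈ n.primeFactors, ∑ j ∈ Ico 1 n, (j : ZMod p) ^ m = -1 := by
        simp_rw [hcast, ZMod.intCast_eq_intCast_iff_of_squarefree hn.squarefree]
    _ ↔ ∀ p ∈ n.primeFactors, p - 1 ∣ m :=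
        forall₂_congr fun p hp => hn.sum_Ico_pow_eq_neg_one_iff hp hm
    _ ↔ carmichael n ∣ m := by
        rw [← Finset.lcm_dvd_iff, ← ArithmeticFunction.carmichael_of_squarefree hn.squarefree,
          ArithmeticFunction.carmichael_eq_exponent (by omega), carmichael]
    _ ↔ carmichael n / (carmichael n).gcd (n - 1) ∣ k :=
        Nat.dvd_mul_iff_div_gcd_dvd (Monoid.ExponentExists.of_finite.exponent_pos)
    _ ↔ _ := by
        rw [dvd_iff_exists_eq_mul_left]
        refine exists_congr fun t => ⟨fun h => ⟨Nat.pos_of_ne_zero ?_, h⟩, And.right⟩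
        rintro rfl
        omega
end
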